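/- If the condensation D* of a digraph D contains no in-ray, in particular if D has only finitely many strong components (e.g., D is finite), then D has a point-basis. -/

import Mathlib

/-- Reachability by a directed walk (allowing the trivial walk). -/
def Reach {V : Type*} (A : V → V → Prop) : V → V → Prop := Relation.ReflTransGen A
/-- The strong component of a vertex: all vertices mutually reachable with it. -/
def SCC {V : Type*} (A : V → V → Prop) (v : V) : Set V :=
  {w | Reach A v w ∧ Reach A w v}

/-- A set is a strong component iff it is the strong component of some vertex. -/
def IsSCC {V : Type*} (A : V → V → Prop) (C : Set V) : Prop := ∃ v, C = SCC A v

/-- A strong component is initial if no arc enters it from outside. -/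
def InitialSCC {V : Type*} (A : V → V → Prop) (C : Set V) : Prop :=
  IsSCC A C ∧ ∀ x y, A x y → y ∈ C → x ∈ C
/-- A set S is point-reaching if every vertex is reachable from some vertex of S. -/
def PointReaching {V : Type*} (A : V → V → Prop) (S : Set V) : Prop :=
  ∀ v : V, ∃ s ∈ S, Reach A s v
/-- A point-basis is a minimal point-reaching set. -/
def IsPointBasis {V : Type*} (A : V → V → Prop) (B : Set V) : Prop :=
  PointReaching A B ∧ ∀ B' ⊂ B, ¬ PointReaching A B'
/-- Arc relation of the condensation D*: between two distinct strong components,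
when some arc of D goes from the first to the second. -/
def CondArc {V : Type*} (A : V → V → Prop) (C₁ C₂ : Set V) : Prop :=
  IsSCC A C₁ ∧ IsSCC A C₂ ∧ C₁ ≠ C₂ ∧ ∃ x ∈ C₁, ∃ y ∈ C₂, A x y

/-!
Without in-rays the arcs of the condensation are well-founded, so walking backwards along arcs
entering strong components from any vertex ends in an initial strong component. Picking one vertex
from each initial component gives a point-reaching set, and it is minimal because the only
vertices reaching an initial component lie in it.
-/

/-- `m` lies in an initial strong component. -/
def IsInitialVertex {V : Type*} (A : V → V → Prop) (m : V) : Prop :=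
  ∀ x, Reach A x m → Reach A m x

section Condensation

variable {V : Type*} (A : V → V → Prop)

lemma mem_SCC_self (v : V) : v ∈ SCC A v :=
  ⟨.refl, .refl⟩

variable {A}

lemma reach_of_SCC_eq {a b : V} (h : SCC A a = SCC A b) : Reach A a b :=
  (h ▸ mem_SCC_self A b : b ∈ SCC A a).1

lemma SCC_eq_of_reach {a b : V} (hab : Reach A a b) (hba : Reach A b a) : SCC A a = SCC A b := by
  ext x
  exact ⟨fun ⟨hax, hxa⟩ => ⟨hba.trans hax, hxa.trans hab⟩,
    fun ⟨hbx, hxb⟩ => ⟨hab.trans hbx, hxb.trans hba⟩⟩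

lemma exists_arc_into_SCC {x m : V} (hxm : Reach A x m) (hx : x ∉ SCC A m) :
    ∃ p q, A p q ∧ p ∉ SCC A m ∧ q ∈ SCC A m := by
  induction hxm using Relation.ReflTransGen.head_induction_on with
  | refl => exact absurd (mem_SCC_self A m) hx
  | @head a c hac _ ih =>
    by_cases hc : c ∈ SCC A m
    · exact ⟨a, c, hac, hx, hc⟩
    · exact ih hc

lemma exists_condArc_of_not_isInitialVertex {m : V} (hm : ¬ IsInitialVertex A m) :
    ∃ p, CondArc A (SCC A p) (SCC A m) := by
  simp only [IsInitialVertex, not_forall] at hm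
  obtain ⟨x, hxm, hmx⟩ := hm
  obtain ⟨p, q, hpq, hp, hq⟩ := exists_arc_into_SCC hxm fun hx => hmx hx.1
  exact ⟨p, ⟨p, rfl⟩, ⟨m, rfl⟩, fun h => hp (h ▸ mem_SCC_self A p), p, mem_SCC_self A p, q, hq, hpq⟩

lemma CondArc.reach {p m : V} (h : CondArc A (SCC A p) (SCC A m)) : Reach A p m := by
  obtain ⟨-, -, -, x, hx, y, hy, hxy⟩ := h
  exact Relation.ReflTransGen.trans hx.1 (.head hxy hy.2)

lemma CondArc.not_reach {p m : V} (h : CondArc A (SCC A p) (SCC A m)) : ¬ Reach A m p :=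
  fun hmp => h.2.2.1 (SCC_eq_of_reach h.reach hmp)

lemma injective_SCC_of_condArc_succ {f : ℕ → V}
    (hf : ∀ n, CondArc A (SCC A (f (n + 1))) (SCC A (f n))) :
    Function.Injective fun n => SCC A (f n) := by
  have reach_of_le : ∀ i j, i ≤ j → Reach A (f j) (f i) := by
    intro i j hij
    induction j, hij using Nat.le_induction with
    | base => exact .refl
    | succ j _ ih => exact (hf j).reach.trans ih
  refine Function.Injective.of_lt_imp_ne fun i j hij heq => (hf i).not_reach ?_
  exact (reach_of_SCC_eq heq).trans (reach_of_le (i + 1) j hij)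

lemma wellFounded_condArc_of_no_inray
    (h : ¬ ∃ f : ℕ → Set V, Function.Injective f ∧ (∀ i, IsSCC A (f i)) ∧
      ∀ i, CondArc A (f (i + 1)) (f i)) :
    WellFounded fun p m => CondArc A (SCC A p) (SCC A m) := by
  refine wellFounded_iff_isEmpty_descending_chain.mpr ⟨fun ⟨f, hf⟩ => h ?_⟩
  exact ⟨fun n => SCC A (f n), injective_SCC_of_condArc_succ hf, fun n => ⟨f n, rfl⟩, hf⟩

lemma exists_isInitialVertex_reach (hwf : WellFounded fun p m => CondArc A (SCC A p) (SCC A m))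
    (v : V) : ∃ m, IsInitialVertex A m ∧ Reach A m v := by
  induction v using hwf.induction with
  | _ v ih =>
    by_cases hv : IsInitialVertex A v
    · exact ⟨v, hv, .refl⟩
    · obtain ⟨p, hp⟩ := exists_condArc_of_not_isInitialVertex hv
      obtain ⟨m, hm, hmp⟩ := ih p hp
      exact ⟨m, hm, hmp.trans hp.reach⟩

lemma exists_isPointBasis_of_forall_exists_isInitialVertex
    (h : ∀ v, ∃ m, IsInitialVertex A m ∧ Reach A m v) : ∃ B : Set V, IsPointBasis A B := by
  -- the representative depends only on the component, not on the vertex naming it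
  let rep : V → V := fun m => Classical.choose (⟨m, mem_SCC_self A m⟩ : ∃ x, x ∈ SCC A m)
  have rep_mem (m : V) : rep m ∈ SCC A m := Classical.choose_spec _
  have rep_congr {m m' : V} (_ : SCC A m = SCC A m') : rep m = rep m' := by
    simp only [rep]
    congr 1
  refine ⟨rep '' {m | IsInitialVertex A m}, fun v => ?_, ?_⟩
  · obtain ⟨m, hm, hmv⟩ := h v
    exact ⟨rep m, ⟨m, hm, rfl⟩, (rep_mem m).2.trans hmv⟩
  · rintro B' hB' hreach
    obtain ⟨_, ⟨m, hm, rfl⟩, hmB'⟩ := Set.exists_of_ssubset hB'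
    obtain ⟨s, hsB', hs⟩ := hreach (rep m)
    obtain ⟨m', -, rfl⟩ := hB'.subset hsB'
    have hm'm : Reach A m' m := (rep_mem m').1.trans (hs.trans (rep_mem m).2)
    exact hmB' (rep_congr (SCC_eq_of_reach hm'm (hm m' hm'm)) ▸ hsB')

end Condensation

theorem pointBasis_exists_of_no_inray {V : Type*} (A : V → V → Prop)
    (h : ¬ ∃ f : ℕ → Set V, Function.Injective f ∧ (∀ i, IsSCC A (f i)) ∧
      ∀ i, CondArc A (f (i + 1)) (f i)) :
    ∃ B : Set V, IsPointBasis A B :=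
  exists_isPointBasis_of_forall_exists_isInitialVertex
    (exists_isInitialVertex_reach (wellFounded_condArc_of_no_inray h))
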